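/- arXiv:1910.03937 — 2 statements merged into one kernel-verified Lean document; each statement's English description precedes it below -/
import Mathlib

section
/- Let q be a prime number and l an integer with 2 ≤ l ≤ q, and let B = B(q,l). Then the characteristic polynomial of the real lq×lq matrix Bᵀ B equals (X − ql)·(X − q)^{l(q−1)}·X^{l−1}. Equivalently, Bᵀ (the biadjacency matrix of an (q,l)-biregular bipartite graph) has a simple singular value √(ql), l(q−1) singular values equal to √q, and l−1 singular values equal to 0. -/
/-!
The `(j, j')` block of `Bᵀ B` is `∑ᵢ P^(i (j' - j))`. For `j = j'` this is `q • 1`; for `j ≠ j'`,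
which stay distinct mod `q` as `j, j' < l ≤ q`, the exponent `i (j' - j)` runs over all residues
mod the prime `q`, so the block is the all-ones matrix `J`. Hence `Bᵀ B = (J - 1) ⊗ J + q • 1`.
Writing `(J - 1) ⊗ J` as `E (J - 1) Eᵀ` with `Eᵀ E = q • 1` and commuting the factors reduces its
characteristic polynomial to that of the `l × l` matrix `q (J - 1)`, a rank-one perturbation of
`-q • 1` with eigenvalues `q (l - 1)` (once) and `-q` (`l - 1` times).
-/

open Matrix Polynomial

/-- The `q × q` cyclic-shift permutation matrix over `ℝ`:
`P i j = 1` iff `j ≡ i - 1 (mod q)`. -/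
def cyclicShift (q : ℕ) : Matrix (Fin q) (Fin q) ℝ :=
  Matrix.of fun i j => if (j : ZMod q) = (i : ZMod q) - 1 then 1 else 0

/-- The `q² × lq` array-code matrix `B(q,l)`, with `q` block-rows and `l` block-columns
of `q × q` blocks, whose `(i,j)` block (`0`-indexed) is `P^(i*j)`. -/
def arrayB (q l : ℕ) : Matrix (Fin q × Fin q) (Fin l × Fin q) ℝ :=
  Matrix.of fun r c => (cyclicShift q ^ ((r.1 : ℕ) * (c.1 : ℕ))) r.2 c.2

open Kronecker

namespace ZMod

variable {q : ℕ} [NeZero q]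

theorem finEquiv_apply (c : Fin q) : finEquiv q c = ((c : ℕ) : ZMod q) := by
  obtain ⟨n, rfl⟩ := Nat.exists_eq_add_one_of_ne_zero (NeZero.ne q)
  exact (Fin.cast_val_eq_self c).symm

theorem sum_fin_natCast {M : Type*} [AddCommMonoid M] (g : ZMod q → M) :
    ∑ c : Fin q, g (c : ℕ) = ∑ z, g z := by
  simpa only [RingEquiv.toEquiv_eq_coe, EquivLike.coe_coe, finEquiv_apply] using
    (finEquiv q).toEquiv.sum_comp g

theorem natCast_fin_injective : Function.Injective fun c : Fin q => ((c : ℕ) : ZMod q) :=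
  fun a b h => (finEquiv q).injective (by simpa only [finEquiv_apply] using h)

end ZMod

theorem sum_ite_eq_mul_of_ne_zero {F R : Type*} [GroupWithZero F] [Fintype F] [DecidableEq F]
    [AddCommMonoidWithOne R] {u : F} (hu : u ≠ 0) (w : F) :
    ∑ x : F, (if w = x * u then (1 : R) else 0) = 1 :=
  calc ∑ x : F, (if w = x * u then (1 : R) else 0)
      = ∑ y : F, (if w = y then (1 : R) else 0) :=
        Fintype.sum_equiv (Equiv.mulRight₀ u hu) _ _ fun _ => rfl
    _ = 1 := by simp

namespace Matrix

variable {R : Type*} [CommRing R] {ι κ : Type*} [Fintype ι] [DecidableEq ι]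

theorem charpoly_add_scalar (M : Matrix ι ι R) (μ : R) :
    (M + scalar ι μ).charpoly = M.charpoly.comp (X - C μ) := by
  simpa [sub_eq_add_neg] using charpoly_sub_scalar M (-μ)

theorem charpoly_kronecker_ones [Fintype κ] [DecidableEq κ] [Nonempty κ] (M : Matrix ι ι R) :
    (M ⊗ₖ (of fun _ _ => 1 : Matrix κ κ R)).charpoly =
      X ^ (Fintype.card ι * (Fintype.card κ - 1)) * ((Fintype.card κ : R) • M).charpoly := by
  let E : Matrix (ι × κ) ι R := of fun r i => (1 : Matrix ι ι R) r.1 i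
  have hK : M ⊗ₖ (of fun _ _ => 1 : Matrix κ κ R) = E * (M * Eᵀ) := by
    ext ⟨i, k⟩ ⟨i', k'⟩
    simp [E, mul_apply, one_apply]
  have hE : Eᵀ * E = (Fintype.card κ : R) • 1 := by
    ext i i'
    simp [E, mul_apply, Fintype.sum_prod_type, one_apply, eq_comm, apply_ite Finset.card]
  have hcard : Fintype.card ι ≤ Fintype.card (ι × κ) := by
    rw [Fintype.card_prod]
    exact Nat.le_mul_of_pos_right _ Fintype.card_pos
  rw [hK, charpoly_mul_comm_of_le _ _ hcard, Matrix.mul_assoc, hE, mul_smul_comm, mul_one,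
    Fintype.card_prod, Nat.mul_sub_one]

theorem charpoly_smul_ones_sub_one [Nonempty ι] (c : R) :
    (c • ((of fun _ _ => 1 : Matrix ι ι R) - 1)).charpoly =
      (X + C c) ^ (Fintype.card ι - 1) * (X - C (c * (Fintype.card ι - 1))) := by
  have hrank_one : c • ((of fun _ _ => 1 : Matrix ι ι R) - 1) =
      vecMulVec (fun _ => c) (fun _ => 1) - scalar ι c := by
    ext i i'
    simp [vecMulVec_apply, one_apply, diagonal_apply, mul_sub]
  obtain ⟨n, hn⟩ := Nat.exists_eq_add_one_of_ne_zero (Fintype.card_ne_zero (α := ι))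
  have hdot : (fun _ => c) ⬝ᵥ (fun _ : ι => (1 : R)) = c * (n + 1) := by
    simp [dotProduct, hn, mul_comm]
  rw [hrank_one, charpoly_sub_scalar, charpoly_vecMulVec, hdot, hn, add_tsub_cancel_right]
  simp only [smul_eq_C_mul, sub_comp, mul_comp, pow_comp, X_comp, C_comp]
  simp only [Nat.cast_succ, add_sub_cancel_right, map_mul, map_add, map_natCast, map_one]
  ring

end Matrix

section cyclicShift

variable {q : ℕ} [NeZero q]

theorem cyclicShift_pow_apply (m : ℕ) (a b : Fin q) :
    (cyclicShift q ^ m) a b = if (b : ZMod q) = a - m then 1 else 0 := by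
  induction m generalizing b with
  | zero =>
    simp [one_apply, ZMod.natCast_fin_injective.eq_iff, eq_comm]
  | succ m ih =>
    rw [pow_succ, mul_apply]
    simp_rw [ih]
    simp only [cyclicShift, of_apply, ite_mul, one_mul, zero_mul]
    refine (ZMod.sum_fin_natCast fun z =>
      if z = (a : ZMod q) - (m : ZMod q) then if (b : ZMod q) = z - 1 then (1 : ℝ) else 0
      else 0).trans ?_
    simp [sub_sub]

theorem transpose_cyclicShift_pow_mul_apply (m n : ℕ) (a b : Fin q) :
    ((cyclicShift q ^ m)ᵀ * cyclicShift q ^ n) a b =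
      if (b : ZMod q) = a + m - n then 1 else 0 := by
  simp only [mul_apply, transpose_apply, cyclicShift_pow_apply, ite_mul, one_mul, zero_mul]
  refine (ZMod.sum_fin_natCast fun z =>
    if (a : ZMod q) = z - (m : ZMod q) then if (b : ZMod q) = z - (n : ZMod q) then (1 : ℝ) else 0
    else 0).trans ?_
  simp only [eq_sub_iff_add_eq, Finset.sum_ite_eq, Finset.mem_univ, if_true]

end cyclicShift

theorem arrayB_transpose_mul_self_apply {q l : ℕ} [NeZero q] (j j' : Fin l) (a b : Fin q) :
    ((arrayB q l)ᵀ * arrayB q l) (j, a) (j', b) =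
      ∑ x : ZMod q, if (b : ZMod q) - a = x * (j - j') then 1 else 0 :=
  calc ((arrayB q l)ᵀ * arrayB q l) (j, a) (j', b)
      = ∑ i : Fin q, ((cyclicShift q ^ ((i : ℕ) * j))ᵀ * cyclicShift q ^ ((i : ℕ) * j')) a b := by
        simp only [mul_apply, Fintype.sum_prod_type, transpose_apply, arrayB, of_apply]
    _ = ∑ i : Fin q,
          if ((b : ℕ) : ZMod q) - (a : ℕ) = (i : ℕ) * (((j : ℕ) : ZMod q) - (j' : ℕ)) then (1 : ℝ)
          else 0 := by
        refine Finset.sum_congr rfl fun i _ => ?_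
        rw [transpose_cyclicShift_pow_mul_apply]
        refine if_congr ?_ rfl rfl
        push_cast
        constructor <;> intro h <;> linear_combination h
    _ = _ := ZMod.sum_fin_natCast fun x : ZMod q =>
        if ((b : ℕ) : ZMod q) - (a : ℕ) = x * (((j : ℕ) : ZMod q) - (j' : ℕ)) then (1 : ℝ) else 0

theorem arrayB_transpose_mul_self {q l : ℕ} (hq : q.Prime) (hlq : l ≤ q) :
    (arrayB q l)ᵀ * arrayB q l =
      ((of fun _ _ => 1 : Matrix (Fin l) (Fin l) ℝ) - 1) ⊗ₖ
          (of fun _ _ => 1 : Matrix (Fin q) (Fin q) ℝ) + scalar _ (q : ℝ) := by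
  have : Fact q.Prime := ⟨hq⟩
  ext ⟨j, a⟩ ⟨j', b⟩
  rw [arrayB_transpose_mul_self_apply]
  simp only [Matrix.add_apply, kronecker_apply, scalar_apply, diagonal_apply, Matrix.sub_apply,
    one_apply, of_apply, Prod.mk.injEq]
  by_cases hj : j = j'
  · subst hj
    simp [ZMod.natCast_fin_injective.eq_iff, sub_eq_zero, eq_comm]
  · have hu : ((j : ℕ) : ZMod q) - j' ≠ 0 := sub_ne_zero.2 fun h =>
      hj (Fin.castLE_injective hlq (ZMod.natCast_fin_injective h))
    rw [sum_ite_eq_mul_of_ne_zero hu]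
    simp [hj]

theorem arrayB_charpoly_of_le (q l : ℕ) (hq : q.Prime) (hl : 2 ≤ l) (hlq : l ≤ q) :
    ((arrayB q l)ᵀ * arrayB q l).charpoly =
      (X - C ((q : ℝ) * l)) * (X - C (q : ℝ)) ^ (l * (q - 1)) * X ^ (l - 1) := by
  have : NeZero q := ⟨hq.ne_zero⟩
  have : Nonempty (Fin l) := ⟨⟨0, by omega⟩⟩
  rw [arrayB_transpose_mul_self hq hlq, charpoly_add_scalar, charpoly_kronecker_ones,
    charpoly_smul_ones_sub_one]
  simp only [Fintype.card_fin, mul_comp, pow_comp, sub_comp, add_comp, X_comp, C_comp,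
    sub_add_cancel]
  simp only [map_mul, map_sub, map_one]
  ring
end

section
/- Let q be a prime number and l an integer with 2 ≤ l ≤ q, and let B = B(q,l). Then every eigenvalue μ of the real matrix Bᵀ B with μ ≠ ql satisfies μ ≤ (√(q−1) + √(l−1))². Consequently Bᵀ is the biadjacency matrix of a Ramanujan bigraph with degrees (q,l): every singular value of B other than the largest one √(ql) is at most √(q−1) + √(l−1). -/
open Matrix Polynomial

/-- The equivalence `Fin q ≃ ZMod q` given by casting. -/
def finZMod (q : ℕ) [NeZero q] : Fin q ≃ ZMod q where
  toFun b := ((b : ℕ) : ZMod q)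
  invFun x := ⟨x.val, x.val_lt⟩
  left_inv b := by ext; simp [ZMod.val_cast_of_lt b.isLt]
  right_inv x := ZMod.natCast_rightInverse x

lemma finZMod_cast_inj (q : ℕ) [NeZero q] {a c : Fin q} :
    ((a : ℕ) : ZMod q) = ((c : ℕ) : ZMod q) ↔ a = c :=
  (finZMod q).injective.eq_iff

lemma sum_fin_indicator (q : ℕ) [NeZero q] (z : ZMod q) (f : ZMod q → ℝ) :
    ∑ b : Fin q, (if ((b : ℕ) : ZMod q) = z then f ((b : ℕ) : ZMod q) else 0) = f z :=
  calc ∑ b : Fin q, (if ((b : ℕ) : ZMod q) = z then f ((b : ℕ) : ZMod q) else 0)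
      = ∑ x : ZMod q, (if x = z then f x else 0) :=
        Equiv.sum_comp (finZMod q) (fun x => if x = z then f x else 0)
    _ = f z := by simp

lemma cyclicShift_pow (q : ℕ) [NeZero q] (m : ℕ) (c a : Fin q) :
    (cyclicShift q ^ m) c a
      = if ((a:ℕ) : ZMod q) = ((c:ℕ) : ZMod q) - (m : ZMod q) then 1 else 0 := by
  induction m generalizing c a with
  | zero =>
    simp only [pow_zero, Matrix.one_apply, Nat.cast_zero, sub_zero, finZMod_cast_inj, eq_comm]
  | succ n ih =>
    rw [pow_succ, Matrix.mul_apply]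
    have : ∀ b : Fin q, (cyclicShift q ^ n) c b * cyclicShift q b a =
        if ((b:ℕ) : ZMod q) = ((c:ℕ):ZMod q) - n then
          (if ((a:ℕ):ZMod q) = ((b:ℕ):ZMod q) - 1 then (1:ℝ) else 0) else 0 := by
      intro b
      rw [ih, cyclicShift]
      simp only [Matrix.of_apply, ite_mul, one_mul, zero_mul]
    rw [Finset.sum_congr rfl fun b _ => this b]
    rw [sum_fin_indicator q _ (fun w => if ((a:ℕ):ZMod q) = w - 1 then (1:ℝ) else 0)]
    congr 1
    push_cast
    try ring_nf

lemma arrayB_entry (q l : ℕ) (hq : q.Prime) (hlq : l ≤ q) (x y : Fin l × Fin q) :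
    ((arrayB q l)ᵀ * arrayB q l) x y =
      if x.1 = y.1 then (if x.2 = y.2 then (q:ℝ) else 0) else 1 := by
  haveI : NeZero q := ⟨hq.ne_zero⟩
  haveI : Fact q.Prime := ⟨hq⟩
  rw [Matrix.mul_apply, Fintype.sum_prod_type]
  have inner : ∀ i : Fin q,
      ∑ c : Fin q, (arrayB q l)ᵀ x (i, c) * arrayB q l (i, c) y
      = if ((y.2:ℕ) : ZMod q)
          = ((x.2:ℕ):ZMod q) + ((i:ℕ)*(x.1:ℕ) : ℕ) - ((i:ℕ)*(y.1:ℕ) : ℕ) then 1 else 0 := by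
    intro i
    have step : ∀ c : Fin q, (arrayB q l)ᵀ x (i, c) * arrayB q l (i, c) y
        = if ((c:ℕ):ZMod q) = ((x.2:ℕ):ZMod q) + ((i:ℕ)*(x.1:ℕ) : ℕ) then
            (if ((y.2:ℕ):ZMod q) = ((c:ℕ):ZMod q) - ((i:ℕ)*(y.1:ℕ) : ℕ) then (1:ℝ) else 0)
          else 0 := by
      intro c
      simp only [Matrix.transpose_apply, arrayB, Matrix.of_apply]
      rw [cyclicShift_pow, cyclicShift_pow, ite_mul, one_mul, zero_mul]
      exact if_congr (eq_sub_iff_add_eq.trans eq_comm) rfl rfl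
    rw [Finset.sum_congr rfl fun c _ => step c,
      sum_fin_indicator q _
        (fun w => if ((y.2:ℕ):ZMod q) = w - ((i:ℕ)*(y.1:ℕ) : ℕ) then (1:ℝ) else 0)]
  rw [Finset.sum_congr rfl fun i _ => inner i]
  by_cases h : x.1 = y.1
  · rw [if_pos h]
    have : ∀ i : Fin q, (if ((y.2:ℕ) : ZMod q)
          = ((x.2:ℕ):ZMod q) + ((i:ℕ)*(x.1:ℕ) : ℕ) - ((i:ℕ)*(y.1:ℕ) : ℕ) then (1:ℝ) else 0)
        = if x.2 = y.2 then 1 else 0 := by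
      intro i
      rw [h]
      refine if_congr ?_ rfl rfl
      rw [add_sub_cancel_right, finZMod_cast_inj, eq_comm]
    rw [Finset.sum_congr rfl fun i _ => this i, Finset.sum_const, Finset.card_univ,
      Fintype.card_fin, nsmul_eq_mul]
    by_cases h2 : x.2 = y.2 <;> simp [h2]
  · rw [if_neg h]
    have hd : ((x.1:ℕ):ZMod q) - ((y.1:ℕ):ZMod q) ≠ 0 := by
      rw [sub_ne_zero]
      intro he
      apply h
      have := congrArg ZMod.val he
      rw [ZMod.val_cast_of_lt (lt_of_lt_of_le x.1.isLt hlq),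
        ZMod.val_cast_of_lt (lt_of_lt_of_le y.1.isLt hlq)] at this
      exact Fin.ext this
    have key : ∀ i : Fin q,
        (if ((y.2:ℕ) : ZMod q)
            = ((x.2:ℕ):ZMod q) + ((i:ℕ)*(x.1:ℕ) : ℕ) - ((i:ℕ)*(y.1:ℕ) : ℕ) then (1:ℝ) else 0)
        = if ((i:ℕ):ZMod q)
            = (((y.2:ℕ):ZMod q) - ((x.2:ℕ):ZMod q)) / (((x.1:ℕ):ZMod q) - ((y.1:ℕ):ZMod q))
          then 1 else 0 := by
      intro i
      refine if_congr ?_ rfl rfl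
      rw [eq_div_iff hd]
      push_cast
      constructor
      · intro hh; linear_combination -hh
      · intro hh; linear_combination -hh
    rw [Finset.sum_congr rfl fun i _ => key i, sum_fin_indicator q _ (fun _ => (1:ℝ))]

section Algebra

variable (q l : ℕ)

/-- The all-ones matrix. -/
abbrev allOnes : Matrix (Fin l × Fin q) (Fin l × Fin q) ℝ := Matrix.of fun _ _ => 1

/-- The block-diagonal all-ones matrix. -/
abbrev blockDiag : Matrix (Fin l × Fin q) (Fin l × Fin q) ℝ :=
  Matrix.of fun x y => if x.1 = y.1 then 1 else 0

lemma card_fst_eq (k : Fin l) :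
    (Finset.filter (fun x : Fin l × Fin q => x.1 = k) Finset.univ).card = q := by
  have h : (Finset.filter (fun x : Fin l × Fin q => x.1 = k) Finset.univ)
      = {k} ×ˢ (Finset.univ : Finset (Fin q)) := by
    ext z
    simp only [Finset.mem_filter, Finset.mem_univ, true_and, Finset.mem_product,
      Finset.mem_singleton, and_true]
  rw [h, Finset.card_product, Finset.card_singleton, Finset.card_univ, Fintype.card_fin, one_mul]

lemma card_fst_eq' (k : Fin l) :
    (Finset.filter (fun x : Fin l × Fin q => k = x.1) Finset.univ).card = q := by
  have h : (Finset.filter (fun x : Fin l × Fin q => k = x.1) Finset.univ)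
      = {k} ×ˢ (Finset.univ : Finset (Fin q)) := by
    ext z
    simp only [Finset.mem_filter, Finset.mem_univ, true_and, Finset.mem_product,
      Finset.mem_singleton, and_true]
    exact eq_comm
  rw [h, Finset.card_product, Finset.card_singleton, Finset.card_univ, Fintype.card_fin, one_mul]

lemma allOnes_mul_allOnes : allOnes q l * allOnes q l = ((l:ℝ)*(q:ℝ)) • allOnes q l := by
  ext x y
  simp [Matrix.mul_apply, Finset.card_univ]

lemma allOnes_mul_blockDiag : allOnes q l * blockDiag q l = (q : ℝ) • allOnes q l := by
  ext x y
  simp [Matrix.mul_apply, Fintype.sum_prod_type, Finset.sum_ite_eq', Finset.card_univ,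
    card_fst_eq q l]

lemma blockDiag_mul_allOnes : blockDiag q l * allOnes q l = (q : ℝ) • allOnes q l := by
  ext x y
  simp [Matrix.mul_apply, Fintype.sum_prod_type, Finset.sum_ite_eq, Finset.card_univ,
    card_fst_eq' q l]

lemma blockDiag_mul_blockDiag : blockDiag q l * blockDiag q l = (q : ℝ) • blockDiag q l := by
  ext x y
  simp [Matrix.mul_apply, Fintype.sum_prod_type, ite_and, Finset.sum_ite_eq, Finset.card_univ]
  split_ifs <;> simp

lemma cubic (M : Matrix (Fin l × Fin q) (Fin l × Fin q) ℝ)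
    (hM : M = (q:ℝ) • 1 + allOnes q l - blockDiag q l) :
    M * ((M - (q:ℝ) • 1) * (M - ((q:ℝ)*l) • 1)) = 0 := by
  have hAA := allOnes_mul_allOnes q l
  have hAD := allOnes_mul_blockDiag q l
  have hDA := blockDiag_mul_allOnes q l
  have hDD := blockDiag_mul_blockDiag q l
  subst hM
  simp only [mul_add, add_mul, mul_sub, sub_mul, Matrix.mul_smul, Matrix.smul_mul,
    Matrix.mul_one, Matrix.one_mul, hAA, hAD, hDA, hDD, smul_smul]
  module

end Algebra

lemma arrayB_decomp (q l : ℕ) (hq : q.Prime) (hlq : l ≤ q) :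
    (arrayB q l)ᵀ * arrayB q l = (q:ℝ) • 1 + allOnes q l - blockDiag q l := by
  ext x y
  rw [arrayB_entry q l hq hlq]
  simp only [Matrix.sub_apply, Matrix.add_apply, Matrix.smul_apply, Matrix.one_apply,
    Matrix.of_apply, smul_eq_mul, Prod.ext_iff]
  by_cases h1 : x.1 = y.1 <;> by_cases h2 : x.2 = y.2 <;> simp [h1, h2]

lemma eigenvalue_cubic_root (q l : ℕ) (hq : q.Prime) (hlq : l ≤ q) (μ : ℝ)
    (hμ : Module.End.HasEigenvalue (Matrix.toLin' ((arrayB q l)ᵀ * arrayB q l)) μ) :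
    μ = 0 ∨ μ = q ∨ μ = (q:ℝ)*l := by
  set M := (arrayB q l)ᵀ * arrayB q l with hMdef
  obtain ⟨v, hv⟩ := hμ.exists_hasEigenvector
  have hv1 : M.mulVec v = μ • v := by
    have := hv.apply_eq_smul
    simpa [Matrix.toLin'_apply] using this
  have h3 : (M - ((q:ℝ)*l) • 1).mulVec v = (μ - (q:ℝ)*l) • v := by
    rw [Matrix.sub_mulVec, Matrix.smul_mulVec, Matrix.one_mulVec, hv1, sub_smul]
  have h2 : (M - (q:ℝ) • 1).mulVec v = (μ - (q:ℝ)) • v := by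
    rw [Matrix.sub_mulVec, Matrix.smul_mulVec, Matrix.one_mulVec, hv1, sub_smul]
  have hzero : (μ * ((μ - q) * (μ - (q:ℝ)*l))) • v = 0 := by
    calc (μ * ((μ - q) * (μ - (q:ℝ)*l))) • v
        = M.mulVec ((M - (q:ℝ) • 1).mulVec ((M - ((q:ℝ)*l) • 1).mulVec v)) := by
          rw [h3, Matrix.mulVec_smul, h2, smul_smul, Matrix.mulVec_smul, hv1, smul_smul,
            mul_comm (μ - (q:ℝ)*l) (μ - q), ← mul_assoc, mul_comm _ μ, mul_assoc]
      _ = (M * ((M - (q:ℝ) • 1) * (M - ((q:ℝ)*l) • 1))).mulVec v := by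
          rw [Matrix.mulVec_mulVec, Matrix.mulVec_mulVec, mul_assoc]
      _ = 0 := by rw [cubic q l M (arrayB_decomp q l hq hlq), Matrix.zero_mulVec]
  have := (smul_eq_zero.mp hzero).resolve_right hv.2
  rcases mul_eq_zero.mp this with h | h
  · exact Or.inl h
  rcases mul_eq_zero.mp h with h | h
  · exact Or.inr (Or.inl (by linarith [sub_eq_zero.mp h]))
  · exact Or.inr (Or.inr (sub_eq_zero.mp h))

/-- Every eigenvalue of `BᵀB` other than `ql` is at most `(√(q-1) + √(l-1))²`;
consequently every singular value of `B` other than `√(ql)` is at most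
`√(q-1) + √(l-1)`, i.e. `Bᵀ` is the biadjacency matrix of a `(q,l)`-biregular
Ramanujan bigraph. -/
theorem arrayB_ramanujan_of_le (q l : ℕ) (hq : q.Prime) (hl : 2 ≤ l) (hlq : l ≤ q) :
    (∀ μ : ℝ, Module.End.HasEigenvalue (Matrix.toLin' ((arrayB q l)ᵀ * arrayB q l)) μ →
      μ ≠ (q : ℝ) * l → μ ≤ (Real.sqrt ((q : ℝ) - 1) + Real.sqrt ((l : ℝ) - 1)) ^ 2) ∧
    (∀ s : ℝ, 0 ≤ s →
      Module.End.HasEigenvalue (Matrix.toLin' ((arrayB q l)ᵀ * arrayB q l)) (s ^ 2) →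
      s ≠ Real.sqrt ((q : ℝ) * l) →
      s ≤ Real.sqrt ((q : ℝ) - 1) + Real.sqrt ((l : ℝ) - 1)) := by
  have hq2 : (2:ℝ) ≤ (q:ℝ) := by exact_mod_cast hq.two_le
  have hl2 : (2:ℝ) ≤ (l:ℝ) := by exact_mod_cast hl
  have hqnn : (0:ℝ) ≤ (q:ℝ) - 1 := by linarith
  have hlnn : (0:ℝ) ≤ (l:ℝ) - 1 := by linarith
  have hsum : (q:ℝ) - 1 + ((l:ℝ) - 1)
      ≤ (Real.sqrt ((q : ℝ) - 1) + Real.sqrt ((l : ℝ) - 1)) ^ 2 := by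
    have h1 : Real.sqrt ((q:ℝ) - 1) ^ 2 = (q:ℝ) - 1 := Real.sq_sqrt hqnn
    have h2 : Real.sqrt ((l:ℝ) - 1) ^ 2 = (l:ℝ) - 1 := Real.sq_sqrt hlnn
    have h3 : 0 ≤ Real.sqrt ((q:ℝ) - 1) * Real.sqrt ((l:ℝ) - 1) :=
      mul_nonneg (Real.sqrt_nonneg _) (Real.sqrt_nonneg _)
    nlinarith [h1, h2, h3]
  have hbound : ∀ μ : ℝ,
      Module.End.HasEigenvalue (Matrix.toLin' ((arrayB q l)ᵀ * arrayB q l)) μ →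
      μ ≠ (q : ℝ) * l → μ ≤ (Real.sqrt ((q : ℝ) - 1) + Real.sqrt ((l : ℝ) - 1)) ^ 2 := by
    intro μ hμ hne
    rcases eigenvalue_cubic_root q l hq hlq μ hμ with h | h | h
    · rw [h]; positivity
    · rw [h]; linarith
    · exact absurd h hne
  refine ⟨hbound, fun s hs hμ hne => ?_⟩
  have hne2 : s ^ 2 ≠ (q:ℝ) * l := by
    intro h
    apply hne
    rw [← Real.sqrt_sq hs, h]
  have hle : s ^ 2 ≤ (Real.sqrt ((q : ℝ) - 1) + Real.sqrt ((l : ℝ) - 1)) ^ 2 :=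
    hbound _ hμ hne2
  have ht : 0 ≤ Real.sqrt ((q : ℝ) - 1) + Real.sqrt ((l : ℝ) - 1) :=
    add_nonneg (Real.sqrt_nonneg _) (Real.sqrt_nonneg _)
  calc s = Real.sqrt (s ^ 2) := (Real.sqrt_sq hs).symm
    _ ≤ Real.sqrt ((Real.sqrt ((q : ℝ) - 1) + Real.sqrt ((l : ℝ) - 1)) ^ 2) :=
        Real.sqrt_le_sqrt hle
    _ = Real.sqrt ((q : ℝ) - 1) + Real.sqrt ((l : ℝ) - 1) := Real.sqrt_sq ht
end
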